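/- arXiv:2106.15109 — 4 statements merged into one kernel-verified Lean document; each statement's English description precedes it below -/
import Mathlib

section
/- For n > 2 and 1 < k < n, the identity ∫₁^∞ (t^n - 1)^{-k/n} dt = (sin(π/n) / sin((k-1)π/n)) · ∫₀¹ (1 - x^n)^{-k/n} dx holds. -/
/-!
The substitution `t = 1 / x` turns the left integral into
`∫₀¹ x ^ (k - 2) (1 - x ^ n) ^ (-k/n) dx`, and the substitution `y = x ^ n` turns this and the
right integral into the Beta values `B((k - 1)/n, 1 - k/n) / n` and `B(1/n, 1 - k/n) / n`.
The three parameters `1/n`, `1 - k/n`, `(k - 1)/n` add up to `1`, so writing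
`B(a, b) = Γ(a) Γ(b) / Γ(1 - c)` and applying Euler's reflection formula
`Γ(c) Γ(1 - c) = π / sin(π c)` expresses both as the same product of three Gamma values times
`sin(π c) / π`, whence the ratio `sin(π/n) / sin((k - 1)π/n)`.
-/

open MeasureTheory Set Real ProbabilityTheory

theorem integral_Ioo_rpow_mul_one_sub_rpow_eq_beta {a b : ℝ} (ha : 0 < a) (hb : 0 < b) :
    ∫ x in Ioo 0 1, x ^ (a - 1) * (1 - x) ^ (b - 1) = beta a b := by
  have hint := Complex.betaIntegral_convergent (u := a) (v := b) (by simpa) (by simpa)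
  rw [intervalIntegrable_iff_integrableOn_Ioc_of_le zero_le_one,
    integrableOn_Ioc_iff_integrableOn_Ioo] at hint
  rw [beta_eq_betaIntegralReal a b ha hb, Complex.betaIntegral,
    intervalIntegral.integral_of_le zero_le_one, integral_Ioc_eq_integral_Ioo,
    ← RCLike.re_to_complex, ← integral_re hint]
  refine setIntegral_congr_fun measurableSet_Ioo fun x ⟨hx0, hx1⟩ ↦ ?_
  norm_cast
  rw [← Complex.ofReal_cpow hx0.le, ← Complex.ofReal_cpow (sub_nonneg.2 hx1.le),
    RCLike.re_to_complex, ← Complex.ofReal_mul, Complex.ofReal_re]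

theorem rpow_image_Ioo_zero_one {p : ℝ} (hp : 0 < p) :
    (· ^ p) '' Ioo (0 : ℝ) 1 = Ioo 0 1 := by
  ext y
  constructor
  · rintro ⟨x, ⟨hx0, hx1⟩, rfl⟩
    exact ⟨rpow_pos_of_pos hx0 p, rpow_lt_one hx0.le hx1 hp⟩
  · rintro ⟨hy0, hy1⟩
    refine ⟨y ^ p⁻¹, ⟨rpow_pos_of_pos hy0 _, rpow_lt_one hy0.le hy1 (inv_pos.2 hp)⟩, ?_⟩
    simp [← rpow_mul hy0.le, hp.ne']

theorem inv_image_Ioo_zero_one : (·⁻¹) '' Ioo (0 : ℝ) 1 = Ioi 1 := by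
  ext t
  constructor
  · rintro ⟨x, hx, rfl⟩
    exact one_lt_inv_iff₀.2 hx
  · intro ht
    exact ⟨t⁻¹, ⟨inv_pos.2 (zero_lt_one.trans ht), inv_lt_one_of_one_lt₀ ht⟩, inv_inv t⟩

section ChangeOfVariables

variable {E : Type*} [NormedAddCommGroup E] [NormedSpace ℝ E]

theorem integral_Ioo_zero_one_comp_rpow (g : ℝ → E) {p : ℝ} (hp : 0 < p) :
    ∫ x in Ioo 0 1, (p * x ^ (p - 1)) • g (x ^ p) = ∫ y in Ioo 0 1, g y := by
  conv_rhs => rw [← rpow_image_Ioo_zero_one hp]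
  rw [integral_image_eq_integral_abs_deriv_smul measurableSet_Ioo
    (fun x hx ↦ (hasDerivAt_rpow_const (Or.inl hx.1.ne')).hasDerivWithinAt)
    ((rpow_left_injOn hp.ne').mono fun _ hx ↦ hx.1.le)]
  refine setIntegral_congr_fun measurableSet_Ioo fun x ⟨hx0, _⟩ ↦ ?_
  rw [abs_of_pos (by positivity)]

theorem integral_Ioi_one_eq_integral_Ioo_comp_inv (g : ℝ → E) :
    ∫ t in Ioi 1, g t = ∫ x in Ioo 0 1, (x ^ 2)⁻¹ • g x⁻¹ := by
  rw [← inv_image_Ioo_zero_one, integral_image_eq_integral_abs_deriv_smul measurableSet_Ioo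
    (fun x hx ↦ (hasDerivAt_inv hx.1.ne').hasDerivWithinAt) inv_injective.injOn]
  simp only [abs_neg, abs_inv, abs_pow, sq_abs]

end ChangeOfVariables

theorem integral_Ioo_rpow_mul_one_sub_rpow_rpow_eq_beta {n c b : ℝ} (hn : 0 < n) (hc : 0 < c)
    (hb : 0 < b) :
    ∫ x in Ioo (0 : ℝ) 1, x ^ (c - 1) * (1 - x ^ n) ^ (b - 1) = beta (c / n) b / n := by
  rw [eq_div_iff hn.ne', ← integral_Ioo_rpow_mul_one_sub_rpow_eq_beta (div_pos hc hn) hb,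
    ← integral_Ioo_zero_one_comp_rpow (fun y ↦ y ^ (c / n - 1) * (1 - y) ^ (b - 1)) hn,
    ← integral_mul_const]
  refine setIntegral_congr_fun measurableSet_Ioo fun x ⟨hx0, _⟩ ↦ ?_
  have hpow : x ^ (n - 1) * (x ^ n) ^ (c / n - 1) = x ^ (c - 1) := by
    rw [← rpow_mul hx0.le, ← rpow_add hx0]
    congr 1
    field_simp
    ring
  simp only [smul_eq_mul]
  rw [← hpow]
  ring

theorem integral_Ioi_one_rpow_sub_one_rpow_neg_div {n : ℝ} (hn : 0 < n) (k : ℝ) :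
    ∫ t in Ioi (1 : ℝ), (t ^ n - 1) ^ (-(k / n)) =
      ∫ x in Ioo (0 : ℝ) 1, x ^ (k - 2) * (1 - x ^ n) ^ (-(k / n)) := by
  rw [integral_Ioi_one_eq_integral_Ioo_comp_inv]
  refine setIntegral_congr_fun measurableSet_Ioo fun x ⟨hx0, hx1⟩ ↦ ?_
  have hxn : 0 < x ^ n := rpow_pos_of_pos hx0 n
  have hsub : x⁻¹ ^ n - 1 = (1 - x ^ n) / x ^ n := by
    rw [inv_rpow hx0.le]
    field_simp
  have hpow : (x ^ n) ^ (-(k / n)) = (x ^ k)⁻¹ := by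
    rw [← rpow_mul hx0.le, mul_neg, mul_div_cancel₀ k hn.ne', rpow_neg hx0.le]
  have hk : x ^ (k - 2) = x ^ k / x ^ 2 := by
    rw [rpow_sub hx0, rpow_two]
  rw [smul_eq_mul, hsub, div_rpow (sub_nonneg.2 (rpow_le_one hx0.le hx1.le hn.le)) hxn.le,
    hpow, hk]
  field_simp

theorem ProbabilityTheory.beta_eq_of_add_add_eq_one {a b c : ℝ} (hc : 0 < c)
    (h : a + b + c = 1) :
    beta a b = Gamma a * Gamma b * Gamma c * sin (π * c) / π := by
  have hG : Gamma c ≠ 0 := (Gamma_pos_of_pos hc).ne'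
  rw [beta, show a + b = 1 - c by linarith,
    eq_div_of_mul_eq hG ((mul_comm _ _).trans (Gamma_mul_Gamma_one_sub c))]
  field_simp

theorem ProbabilityTheory.beta_eq_sin_div_sin_mul_beta {a b c : ℝ} (ha : 0 < a) (hc : 0 < c)
    (h : a + b + c = 1) (hsin : sin (π * c) ≠ 0) :
    beta c b = sin (π * a) / sin (π * c) * beta a b := by
  rw [beta_eq_of_add_add_eq_one ha (by linarith : c + b + a = 1), beta_eq_of_add_add_eq_one hc h]
  field_simp

theorem stmt_3_general (n k : ℝ) (hk1 : 1 < k) (hkn : k < n) :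
    ∫ t in Set.Ioi (1:ℝ), (t ^ n - 1) ^ (-(k / n)) =
      (Real.sin (Real.pi / n) / Real.sin ((k - 1) * Real.pi / n)) *
        ∫ x in (0:ℝ)..1, (1 - x ^ n) ^ (-(k / n)) := by
  have hn0 : 0 < n := by linarith
  have hc : 0 < (k - 1) / n := div_pos (by linarith) hn0
  have hb : 0 < 1 - k / n := sub_pos.2 ((div_lt_one hn0).2 hkn)
  have hsum : 1 / n + (1 - k / n) + (k - 1) / n = 1 := by field_simp; ring
  have hsin : sin (π * ((k - 1) / n)) ≠ 0 := by
    refine (sin_pos_of_pos_of_lt_pi (by positivity) ?_).ne'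
    have : (k - 1) / n < 1 := (div_lt_one hn0).2 (by linarith)
    nlinarith [pi_pos]
  have hL := integral_Ioo_rpow_mul_one_sub_rpow_rpow_eq_beta hn0 (by linarith : 0 < k - 1) hb
  have hR := integral_Ioo_rpow_mul_one_sub_rpow_rpow_eq_beta hn0 one_pos hb
  simp only [sub_self, rpow_zero, one_mul, sub_sub_cancel_left] at hL hR
  rw [show k - 1 - 1 = k - 2 by ring] at hL
  rw [integral_Ioi_one_rpow_sub_one_rpow_neg_div hn0, hL,
    intervalIntegral.integral_of_le zero_le_one, integral_Ioc_eq_integral_Ioo, hR,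
    beta_eq_sin_div_sin_mul_beta (by positivity) hc hsum hsin,
    show π / n = π * (1 / n) by ring, show (k - 1) * π / n = π * ((k - 1) / n) by ring]
  ring

theorem stmt_3 (n k : ℝ) (hn : 2 < n) (hk1 : 1 < k) (hkn : k < n) :
    ∫ t in Set.Ioi (1:ℝ), (t ^ n - 1) ^ (-(k / n)) =
      (Real.sin (Real.pi / n) / Real.sin ((k - 1) * Real.pi / n)) *
        ∫ x in (0:ℝ)..1, (1 - x ^ n) ^ (-(k / n)) :=
  stmt_3_general n k hk1 hkn
end

section
/- For n > 2 and 1 < k < n, the identity ∫₀^∞ (1 + t^n)^{-k/n} dt = (cos(π/n) + sin(π/n)·cot((k-1)π/n)) · ∫₀¹ (1 - x^n)^{-k/n} dx holds. -/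
/-!
Both integrals `I` (over `(0, ∞)`) and `J` (over `(0, 1)`) are Beta integrals: the substitution
`t ^ n = u / (1 - u)` gives `n I = B(1/n, (k-1)/n)` and `x ^ n = u` gives `n J = B(1/n, 1 - k/n)`.
Expanding `B` through `Γ` and applying Euler's reflection formula to `Γ((k-1)/n)` and `Γ(k/n)`
leaves `I / J = sin(π k/n) / sin(π (k-1)/n)`, which the addition formula for `sin` rewrites as
`cos(π/n) + sin(π/n) cot((k-1)π/n)`.
-/

open MeasureTheory Real Set

theorem integral_Ioo_rpow_mul_one_sub_rpow {a b : ℝ} (ha : 0 < a) (hb : 0 < b) :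
    ∫ x in Ioo (0:ℝ) 1, x ^ (a - 1) * (1 - x) ^ (b - 1) =
      Gamma a * Gamma b / Gamma (a + b) := by
  apply Complex.ofReal_injective
  have hbeta : Complex.betaIntegral a b =
      Complex.Gamma a * Complex.Gamma b / Complex.Gamma (a + b) :=
    Complex.betaIntegral_eq_Gamma_mul_div a b (by simpa) (by simpa)
  rw [← Complex.ofReal_add, Complex.Gamma_ofReal, Complex.Gamma_ofReal,
    Complex.Gamma_ofReal] at hbeta
  push_cast
  rw [← hbeta, Complex.betaIntegral, intervalIntegral.integral_of_le zero_le_one,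
    integral_Ioc_eq_integral_Ioo, ← integral_complex_ofReal]
  refine setIntegral_congr_fun measurableSet_Ioo fun x hx ↦ ?_
  push_cast
  rw [Complex.ofReal_cpow hx.1.le, Complex.ofReal_cpow (sub_nonneg.2 hx.2.le)]
  push_cast
  rfl

theorem integral_Ioi_rpow_mul_one_add_rpow {a b : ℝ} (ha : 0 < a) (hb : 0 < b) :
    ∫ x in Ioi (0:ℝ), x ^ (a - 1) * (1 + x) ^ (-(a + b)) =
      Gamma a * Gamma b / Gamma (a + b) := by
  have hbij : BijOn (fun u : ℝ ↦ u / (1 - u)) (Ioo 0 1) (Ioi 0) := by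
    refine InvOn.bijOn (f' := fun x ↦ x / (1 + x)) ⟨fun x hx ↦ ?_, fun u hu ↦ ?_⟩
      (fun u hu ↦ div_pos hu.1 (sub_pos.2 hu.2)) fun x hx ↦ ?_
    · have : 1 - x ≠ 0 := (sub_pos.2 hx.2).ne'
      field_simp
      ring
    · have : 0 < 1 + u := by simp only [mem_Ioi] at hu; linarith
      field_simp
      ring
    · have : 0 < 1 + x := by simp only [mem_Ioi] at hx; linarith
      exact ⟨div_pos hx this, (div_lt_one this).2 (by linarith)⟩
  have hderiv : ∀ u ∈ Ioo (0:ℝ) 1,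
      HasDerivWithinAt (fun u : ℝ ↦ u / (1 - u)) (((1 - u) ^ 2)⁻¹) (Ioo 0 1) u := by
    intro u hu
    have : HasDerivAt (fun u : ℝ ↦ u / (1 - u)) ((1 * (1 - u) - u * (0 - 1)) / (1 - u) ^ 2) u :=
      (hasDerivAt_id' u).div ((hasDerivAt_const u 1).sub (hasDerivAt_id' u)) (sub_pos.2 hu.2).ne'
    exact (this.congr_deriv (by ring)).hasDerivWithinAt
  rw [← hbij.image_eq,
    integral_image_eq_integral_abs_deriv_smul measurableSet_Ioo hderiv hbij.injOn,
    ← integral_Ioo_rpow_mul_one_sub_rpow ha hb]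
  refine setIntegral_congr_fun measurableSet_Ioo fun u hu ↦ ?_
  have hv : 0 < 1 - u := sub_pos.2 hu.2
  have h1 : 1 + u / (1 - u) = (1 - u)⁻¹ := by field_simp; ring
  have hpow :
      (1 - u) ^ (b - 1) = ((1 - u) ^ 2)⁻¹ * ((1 - u) ^ (a - 1))⁻¹ * (1 - u) ^ (a + b) := by
    rw [← rpow_natCast, ← rpow_neg hv.le, ← rpow_neg hv.le, ← rpow_add hv, ← rpow_add hv]
    ring_nf
  rw [smul_eq_mul, abs_of_pos (by positivity), h1, div_rpow hu.1.le hv.le, inv_rpow hv.le,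
    ← rpow_neg hv.le, neg_neg, hpow]
  ring

theorem integral_Ioo_comp_rpow_of_pos {E : Type*} [NormedAddCommGroup E] [NormedSpace ℝ E]
    {g : ℝ → E} {p : ℝ} (hp : 0 < p) :
    ∫ x in Ioo (0:ℝ) 1, (p * x ^ (p - 1)) • g (x ^ p) = ∫ y in Ioo (0:ℝ) 1, g y := by
  have himage : (· ^ p) '' Ioo (0:ℝ) 1 = Ioo 0 1 := by
    refine (InvOn.bijOn (f' := (· ^ p⁻¹)) ⟨fun y hy ↦ ?_, fun x hx ↦ ?_⟩
      (fun x hx ↦ ?_) fun y hy ↦ ?_).image_eq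
    · simp [← rpow_mul hy.1.le, hp.ne']
    · simp [← rpow_mul hx.1.le, hp.ne']
    · exact ⟨rpow_pos_of_pos hx.1 p, rpow_lt_one hx.1.le hx.2 hp⟩
    · exact ⟨rpow_pos_of_pos hy.1 _, rpow_lt_one hy.1.le hy.2 (inv_pos.2 hp)⟩
  conv_rhs => rw [← himage]
  rw [integral_image_eq_integral_abs_deriv_smul measurableSet_Ioo
    (fun x hx ↦ (hasDerivAt_rpow_const (Or.inl hx.1.ne')).hasDerivWithinAt)
    ((rpow_left_injOn hp.ne').mono fun x hx ↦ le_of_lt hx.1)]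
  refine setIntegral_congr_fun measurableSet_Ioo fun x hx ↦ ?_
  rw [abs_of_pos (by have := hx.1; positivity)]

theorem integral_Ioi_one_add_rpow_rpow_neg {n s : ℝ} (hn : 0 < n) (hs : 1 / n < s) :
    ∫ t in Ioi (0:ℝ), (1 + t ^ n) ^ (-s) =
      Gamma (1 / n) * Gamma (s - 1 / n) / (n * Gamma s) := by
  have hbeta := integral_Ioi_rpow_mul_one_add_rpow (one_div_pos.2 hn) (sub_pos.2 hs)
  rw [add_sub_cancel] at hbeta
  rw [← integral_comp_rpow_Ioi_of_pos (one_div_pos.2 hn), div_mul_eq_div_div_swap, ← hbeta,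
    ← integral_div]
  refine setIntegral_congr_fun measurableSet_Ioi fun x hx ↦ ?_
  rw [← rpow_mul (le_of_lt hx), one_div_mul_cancel hn.ne', rpow_one, smul_eq_mul]
  ring

theorem integral_one_sub_rpow_rpow_neg {n s : ℝ} (hn : 0 < n) (hs : s < 1) :
    ∫ x in (0:ℝ)..1, (1 - x ^ n) ^ (-s) =
      Gamma (1 / n) * Gamma (1 - s) / (n * Gamma (1 / n + (1 - s))) := by
  rw [intervalIntegral.integral_of_le zero_le_one, integral_Ioc_eq_integral_Ioo,
    ← integral_Ioo_comp_rpow_of_pos (one_div_pos.2 hn), div_mul_eq_div_div_swap,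
    ← integral_Ioo_rpow_mul_one_sub_rpow (one_div_pos.2 hn) (sub_pos.2 hs), ← integral_div]
  refine setIntegral_congr_fun measurableSet_Ioo fun x hx ↦ ?_
  rw [← rpow_mul hx.1.le, one_div_mul_cancel hn.ne', rpow_one, smul_eq_mul, sub_sub_cancel_left]
  ring

theorem cos_add_sin_mul_cot {x y : ℝ} (hy : sin y ≠ 0) :
    cos x + sin x * cot y = sin (x + y) / sin y := by
  rw [cot_eq_cos_div_sin, sin_add]
  field_simp
  ring

theorem Gamma_eq_pi_div_sin_mul_Gamma_one_sub {s : ℝ} (hs : sin (π * s) ≠ 0) :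
    Gamma s = π / (sin (π * s) * Gamma (1 - s)) := by
  have hrefl := Gamma_mul_Gamma_one_sub s
  have hΓ : Gamma (1 - s) ≠ 0 := by
    intro h
    rw [h, mul_zero, eq_comm, div_eq_zero_iff] at hrefl
    exact hrefl.elim pi_ne_zero hs
  rw [← div_div, ← hrefl, mul_div_cancel_right₀ _ hΓ]

theorem stmt_4 (n k : ℝ) (hn : 2 < n) (hk1 : 1 < k) (hkn : k < n) :
    ∫ t in Set.Ioi (0:ℝ), (1 + t ^ n) ^ (-(k / n)) =
      (Real.cos (Real.pi / n) +
        Real.sin (Real.pi / n) * Real.cot ((k - 1) * Real.pi / n)) *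
        ∫ x in (0:ℝ)..1, (1 - x ^ n) ^ (-(k / n)) := by
  have hn0 : 0 < n := by linarith
  have hsin : ∀ s : ℝ, 0 < s → s < 1 → sin (π * s) ≠ 0 := fun s h0 h1 ↦
    (sin_pos_of_pos_of_lt_pi (by positivity) (by nlinarith [pi_pos])).ne'
  have ha0 : 0 < (k - 1) / n := div_pos (by linarith) hn0
  have ha1 : (k - 1) / n < 1 := (div_lt_one hn0).2 (by linarith)
  have hb0 : 0 < k / n := div_pos (by linarith) hn0
  have hb1 : k / n < 1 := (div_lt_one hn0).2 hkn
  rw [integral_Ioi_one_add_rpow_rpow_neg hn0 (by gcongr), integral_one_sub_rpow_rpow_neg hn0 hb1,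
    show k / n - 1 / n = (k - 1) / n by ring, show 1 / n + (1 - k / n) = 1 - (k - 1) / n by ring,
    show (k - 1) * π / n = π * ((k - 1) / n) by ring, cos_add_sin_mul_cot (hsin _ ha0 ha1),
    show π / n + π * ((k - 1) / n) = π * (k / n) by ring,
    Gamma_eq_pi_div_sin_mul_Gamma_one_sub (hsin _ ha0 ha1),
    Gamma_eq_pi_div_sin_mul_Gamma_one_sub (hsin _ hb0 hb1)]
  field_simp
end

section
/- The complex function F_{n,k}(z) = ∫₀^z (1 - ζ^n)^{-k/n} dζ is injective (univalent) on the open unit disk 𝔻 = {z ∈ ℂ : |z| < 1}, where (1 - ζ^n)^{-k/n} is the analytic branch on 𝔻 taking the value 1 at 0. -/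
/-! Noshiro–Warschawski: a holomorphic function whose derivative has positive real part on a
convex domain is injective there. The derivative `(1 - z ^ n) ^ (-k / n)` has positive real part
on the unit disk, because `1 - z ^ n` lies in the right half-plane and raising it to a real power
of modulus at most one keeps the argument inside `(-π / 2, π / 2)`. -/

open Complex

theorem Convex.injOn_of_hasDerivAt_re_pos {s : Set ℂ} (hs : Convex ℝ s) {F f : ℂ → ℂ}
    (hF : ∀ z ∈ s, HasDerivAt F (f z) z) (hf : ∀ z ∈ s, 0 < (f z).re) : Set.InjOn F s := by
  intro z₁ h₁ z₂ h₂ heq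
  by_contra hne
  -- On the segment `z₁ + t w`, `t ↦ Re (conj w * F (z₁ + t w))` has derivative `‖w‖² Re F' > 0`.
  set w := z₂ - z₁
  have hw : w ≠ 0 := sub_ne_zero.2 (Ne.symm hne)
  set γ : ℝ → ℂ := fun t => z₁ + t * w
  have hγ : ∀ t ∈ Set.Icc (0 : ℝ) 1, γ t ∈ s := fun t ht => by
    convert hs.add_smul_sub_mem h₁ h₂ ht using 1
    simp [γ, w, real_smul]
  have hg : ∀ t ∈ Set.Icc (0 : ℝ) 1,
      HasDerivAt (fun t : ℝ => (starRingEnd ℂ w * F (γ t)).re)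
        (starRingEnd ℂ w * (f (γ t) * w)).re t := fun t ht => by
    have hline : HasDerivAt (fun s : ℂ => z₁ + s * w) w t := by
      simpa using ((hasDerivAt_id (t : ℂ)).mul_const w).const_add z₁
    exact (((hF _ (hγ t ht)).comp (t : ℂ) hline).const_mul (starRingEnd ℂ w)).real_of_complex
  obtain ⟨c, hc, hslope⟩ := exists_hasDerivAt_eq_slope _ _ zero_lt_one
    (fun t ht => (hg t ht).continuousAt.continuousWithinAt)
    (fun t ht => hg t (Set.Ioo_subset_Icc_self ht))
  have hpos : 0 < (starRingEnd ℂ w * (f (γ c) * w)).re := by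
    rw [show starRingEnd ℂ w * (f (γ c) * w) = (normSq w : ℂ) * f (γ c) by
      rw [normSq_eq_conj_mul_self]; ring, re_ofReal_mul]
    exact mul_pos (normSq_pos.2 hw) (hf _ (hγ c (Set.Ioo_subset_Icc_self hc)))
  rw [show γ 1 = z₂ by simp [γ, w], show γ 0 = z₁ by simp [γ], heq, sub_self, zero_div] at hslope
  linarith

theorem Complex.exp_ofReal_mul_log_re_pos {c : ℝ} (hc : |c| ≤ 1) {w : ℂ} (hw : 0 < w.re) :
    0 < (exp (c * log w)).re := by
  have harg : |arg w| < Real.pi / 2 := abs_arg_lt_pi_div_two_iff.2 (Or.inl hw)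
  have him : |(c * log w).im| < Real.pi / 2 := by
    rw [im_ofReal_mul, log_im, abs_mul]
    calc |c| * |arg w| ≤ 1 * |arg w| := by gcongr
      _ < Real.pi / 2 := by rwa [one_mul]
  rw [exp_re]
  exact mul_pos (Real.exp_pos _) (Real.cos_pos_of_mem_Ioo (abs_lt.1 him))

theorem stmt_7_general (n : ℕ) (k : ℝ) (hk1 : 1 ≤ k) (hkn : k < n)
    (F : ℂ → ℂ)
    (hF : ∀ z ∈ Metric.ball (0:ℂ) 1,
      HasDerivAt F (Complex.exp (-(k / n : ℂ) * Complex.log (1 - z ^ n))) z) :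
    Set.InjOn F (Metric.ball (0:ℂ) 1) := by
  have hn : (0 : ℝ) < n := by linarith
  refine (convex_ball 0 1).injOn_of_hasDerivAt_re_pos hF fun z hz => ?_
  have hzn : ‖z ^ n‖ < 1 := by
    rw [norm_pow]
    exact pow_lt_one₀ (norm_nonneg z) (mem_ball_zero_iff.1 hz) (by exact_mod_cast hn.ne')
  have hre : 0 < (1 - z ^ n).re := by
    simp only [sub_re, one_re]
    linarith [re_le_norm (z ^ n)]
  have hexp : |-(k / n)| ≤ 1 := by
    rw [abs_neg, abs_of_pos (by positivity), div_le_one hn]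
    exact hkn.le
  simpa using exp_ofReal_mul_log_re_pos hexp hre

theorem stmt_7 (n : ℕ) (hn : 2 ≤ n) (k : ℝ) (hk1 : 1 ≤ k) (hkn : k < n)
    (F : ℂ → ℂ) (hF0 : F 0 = 0)
    (hF : ∀ z ∈ Metric.ball (0:ℂ) 1,
      HasDerivAt F (Complex.exp (-(k / n : ℂ) * Complex.log (1 - z ^ n))) z) :
    Set.InjOn F (Metric.ball (0:ℂ) 1) :=
  stmt_7_general n k hk1 hkn F hF
end

section
/- Let n ≥ 3 and k = 1. No function analytic in a neighborhood of φ_{n,1} can agree with S_{n,1} on [0, φ_{n,1}): if g is analytic at φ_{n,1} with g = S_{n,1} on an interval (φ_{n,1} - ε, φ_{n,1}), then a contradiction arises because the local behavior of the inverse of F_{n,1} at 1 is (φ_{n,1} - u)^{n/(n-1)} up to analytic units, and n/(n-1) is not an integer for n ≥ 3. Concretely: the function u ↦ 1 - S_{n,1}(u) behaves like c(φ_{n,1}-u)^{n/(n-1)}(1 + o(1)) as u → φ_{n,1}⁻ for some constant c > 0, which is incompatible with analyticity of S_{n,1} at φ_{n,1} for n ≥ 3. -/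
/-!
Since `1 - x ^ n = (1 - x) (1 + x + ⋯ + x ^ (n - 1))`, the tail `∫ x in y..1, (1 - x ^ n) ^ (-p)`
lies between `n ^ (-p)` and `(1 + y + ⋯ + y ^ (n - 1)) ^ (-p)` times
`∫ x in y..1, (1 - x) ^ (-p) = (1 - y) ^ (1 - p) / (1 - p)`, so it is asymptotic to
`K (1 - y) ^ (1 - p)` with `K = n ^ (-p) / (1 - p)` as `y → 1⁻`. With `p = 1 / n` and `y = S u`
this reads `φ - u ∼ K (1 - S u) ^ ((n - 1) / n)`, i.e.
`1 - S u ∼ K ^ (-n / (n - 1)) (φ - u) ^ (n / (n - 1))`. A real analytic function vanishing to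
order `m` at `φ` behaves like `c (u - φ) ^ m` with `c ≠ 0`, so `1 - S` can agree with one on the
left of `φ` only if `n / (n - 1)` is an integer, which it is not for `n ≥ 3`.
-/

open Real Set Filter Topology MeasureTheory intervalIntegral

section InverseFunction

variable {F S : ℝ → ℝ} {a b : ℝ}

lemma ContinuousOn.mapsTo_and_rightInvOn_of_leftInvOn (hab : a ≤ b)
    (hF : ContinuousOn F (Icc a b)) (hS : LeftInvOn S F (Icc a b)) :
    MapsTo S (Icc (F a) (F b)) (Icc a b) ∧ RightInvOn S F (Icc (F a) (F b)) := by
  refine ⟨fun u hu => ?_, fun u hu => ?_⟩ <;>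
    obtain ⟨y, hy, rfl⟩ := intermediate_value_Icc hab hF hu
  · rwa [hS hy]
  · rw [hS hy]

lemma ContinuousOn.tendsto_nhdsLT_of_leftInvOn (hab : a < b) (hFc : ContinuousOn F (Icc a b))
    (hFm : StrictMonoOn F (Icc a b)) (hS : LeftInvOn S F (Icc a b)) :
    Tendsto S (𝓝[<] F b) (𝓝[<] b) := by
  obtain ⟨hmaps, hinv⟩ := hFc.mapsTo_and_rightInvOn_of_leftInvOn hab.le hS
  have ha : a ∈ Icc a b := left_mem_Icc.mpr hab.le
  have hb : b ∈ Icc a b := right_mem_Icc.mpr hab.le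
  have hFab : F a < F b := hFm ha hb hab
  have hmono : MonotoneOn S (Icc (F a) (F b)) := fun u hu v hv huv =>
    (hFm.le_iff_le (hmaps hu) (hmaps hv)).mp (by rwa [hinv hu, hinv hv])
  have himage : Icc a b ⊆ S '' Icc (F a) (F b) := fun y hy =>
    ⟨F y, ⟨hFm.monotoneOn ha hy hy.1, hFm.monotoneOn hy hb hy.2⟩, hS hy⟩
  have hcont : ContinuousWithinAt S (Iic (F b)) (F b) :=
    continuousWithinAt_left_of_monotoneOn_of_image_mem_nhdsWithin hmono (Icc_mem_nhdsLE hFab)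
      (by rw [hS hb]; exact mem_of_superset (Icc_mem_nhdsLE hab) himage)
  rw [ContinuousWithinAt, hS hb] at hcont
  refine tendsto_nhdsWithin_iff.mpr
    ⟨hcont.mono_left (nhdsWithin_mono _ Iio_subset_Iic_self), ?_⟩
  filter_upwards [Ioo_mem_nhdsLT hFab] with u hu
  refine (hmaps (Ioo_subset_Icc_self hu)).2.lt_of_ne fun h => hu.2.ne ?_
  rw [← hinv (Ioo_subset_Icc_self hu), h]

end InverseFunction

lemma tendsto_div_rpow_inv_of_tendsto_div_rpow {ι : Type*} {l : Filter ι} {r t : ι → ℝ}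
    {α K : ℝ} (hα : α ≠ 0) (hK : 0 < K) (hr : ∀ᶠ i in l, 0 ≤ r i) (ht : ∀ᶠ i in l, 0 < t i)
    (h : Tendsto (fun i => r i / t i ^ α) l (𝓝 K)) :
    Tendsto (fun i => t i / r i ^ α⁻¹) l (𝓝 (K ^ (-α⁻¹))) := by
  refine (h.rpow_const (Or.inl hK.ne')).congr' ?_
  filter_upwards [hr, ht] with i hri hti
  rw [div_rpow hri (rpow_nonneg hti.le _), ← rpow_mul hti.le, rpow_neg hri, mul_neg,
    mul_inv_cancel₀ hα, rpow_neg_one, inv_div_inv]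

lemma tendsto_sub_rpow_nhdsLT {a β : ℝ} (hβ : 0 < β) :
    Tendsto (fun u => (a - u) ^ β) (𝓝[<] a) (𝓝 0) := by
  have h : Tendsto (fun u => a - u) (𝓝 a) (𝓝 (a - a)) := tendsto_const_nhds.sub tendsto_id
  rw [sub_self] at h
  simpa [zero_rpow hβ.ne'] using (h.mono_left nhdsWithin_le_nhds).rpow_const (Or.inr hβ.le)

lemma AnalyticAt.exists_natCast_eq_of_tendsto_div_rpow {h : ℝ → ℝ} {a q c : ℝ}
    (hh : AnalyticAt ℝ h a) (hc : c ≠ 0)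
    (hlim : Tendsto (fun u => h u / (a - u) ^ q) (𝓝[<] a) (𝓝 c)) : ∃ m : ℕ, q = m := by
  cases hord : analyticOrderAt h a with
  | top =>
    refine absurd (tendsto_nhds_unique hlim (tendsto_const_nhds.congr' ?_)) hc
    filter_upwards [(analyticOrderAt_eq_top.mp hord).filter_mono nhdsWithin_le_nhds] with u hu
    rw [hu, zero_div]
  | coe m =>
    obtain ⟨ψ, hψ, hψa, hhψ⟩ := hh.analyticOrderAt_eq_natCast.mp hord
    have hfactor : ∀ᶠ u in 𝓝[<] a,
        h u / (a - u) ^ q = (-1) ^ m * ψ u * (a - u) ^ ((m : ℝ) - q) := by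
      filter_upwards [hhψ.filter_mono nhdsWithin_le_nhds, self_mem_nhdsWithin] with u hu hua
      have hpos : 0 < a - u := sub_pos.mpr hua
      rw [hu, smul_eq_mul, rpow_sub hpos, rpow_natCast, ← neg_sub a u, neg_pow]
      field_simp
    have hψlim : Tendsto (fun u => (-1) ^ m * ψ u) (𝓝[<] a) (𝓝 ((-1) ^ m * ψ a)) :=
      (tendsto_const_nhds.mul hψ.continuousAt.tendsto).mono_left nhdsWithin_le_nhds
    refine ⟨m, ?_⟩
    rcases lt_trichotomy q m with hlt | heq | hgt
    · have h0 := hψlim.mul (tendsto_sub_rpow_nhdsLT (a := a) (sub_pos.mpr hlt))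
      rw [mul_zero] at h0
      exact absurd (tendsto_nhds_unique hlim (h0.congr' (hfactor.mono fun _ hu => hu.symm))) hc
    · exact heq
    · have h0 := hlim.mul (tendsto_sub_rpow_nhdsLT (a := a) (sub_pos.mpr hgt))
      rw [mul_zero] at h0
      have hψ0 : Tendsto (fun u => (-1) ^ m * ψ u) (𝓝[<] a) (𝓝 0) := by
        refine h0.congr' ?_
        filter_upwards [hfactor, self_mem_nhdsWithin] with u hu hua
        rw [hu, mul_assoc, ← rpow_add (sub_pos.mpr hua), sub_add_sub_cancel, sub_self, rpow_zero,
          mul_one]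
      exact absurd (tendsto_nhds_unique hψlim hψ0) (by simp [hψa])

section Integrand

variable {n : ℕ} {p : ℝ}

lemma one_sub_pow_rpow_neg_eq {x : ℝ} (hx0 : 0 ≤ x) (hx1 : x ≤ 1) :
    (1 - x ^ n) ^ (-p) = (1 - x) ^ (-p) * (∑ i ∈ Finset.range n, x ^ i) ^ (-p) := by
  rw [← mul_neg_geom_sum, mul_rpow (by linarith) (by positivity)]

lemma one_le_geom_sum (hn : 1 ≤ n) {x : ℝ} (hx : 0 ≤ x) : 1 ≤ ∑ i ∈ Finset.range n, x ^ i := by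
  simpa using Finset.single_le_sum (fun i _ => pow_nonneg hx i) (Finset.mem_range.mpr hn)

lemma geom_sum_le_geom_sum {x y : ℝ} (hx : 0 ≤ x) (hxy : x ≤ y) :
    ∑ i ∈ Finset.range n, x ^ i ≤ ∑ i ∈ Finset.range n, y ^ i :=
  Finset.sum_le_sum fun i _ => pow_le_pow_left₀ hx hxy i

lemma one_sub_pow_rpow_neg_le (hn : 1 ≤ n) (hp : 0 ≤ p) {x y : ℝ} (hy : 0 ≤ y) (hyx : y ≤ x)
    (hx : x ≤ 1) :
    (1 - x ^ n) ^ (-p) ≤ (∑ i ∈ Finset.range n, y ^ i) ^ (-p) * (1 - x) ^ (-p) := by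
  rw [one_sub_pow_rpow_neg_eq (hy.trans hyx) hx, mul_comm]
  refine mul_le_mul_of_nonneg_right ?_ (rpow_nonneg (by linarith) _)
  exact rpow_le_rpow_of_nonpos (by linarith [one_le_geom_sum hn hy])
    (geom_sum_le_geom_sum hy hyx) (neg_nonpos.mpr hp)

lemma le_one_sub_pow_rpow_neg (hn : 1 ≤ n) (hp : 0 ≤ p) {x : ℝ} (hx0 : 0 ≤ x) (hx1 : x ≤ 1) :
    (n : ℝ) ^ (-p) * (1 - x) ^ (-p) ≤ (1 - x ^ n) ^ (-p) := by
  rw [one_sub_pow_rpow_neg_eq hx0 hx1, mul_comm ((1 - x) ^ (-p))]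
  refine mul_le_mul_of_nonneg_right ?_ (rpow_nonneg (by linarith) _)
  refine rpow_le_rpow_of_nonpos (by linarith [one_le_geom_sum hn hx0]) ?_ (neg_nonpos.mpr hp)
  simpa using geom_sum_le_geom_sum (n := n) hx0 hx1

lemma intervalIntegrable_one_sub_rpow_neg (hp : p < 1) (a b : ℝ) :
    IntervalIntegrable (fun x => (1 - x) ^ (-p)) volume a b := by
  simpa using (intervalIntegrable_rpow' (a := 1 - a) (b := 1 - b) (r := -p)
    (by linarith)).comp_sub_left 1

lemma integral_one_sub_rpow_neg (hp : p < 1) (y : ℝ) :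
    ∫ x in y..1, (1 - x) ^ (-p) = (1 - y) ^ (1 - p) / (1 - p) := by
  rw [integral_comp_sub_left (fun t => t ^ (-p)), sub_self,
    integral_rpow (Or.inl (by linarith)), zero_rpow (by linarith)]
  ring_nf

lemma intervalIntegrable_one_sub_pow_rpow_neg (hn : 1 ≤ n) (hp0 : 0 ≤ p) (hp1 : p < 1)
    ⦃a b : ℝ⦄ (ha : a ∈ Icc (0 : ℝ) 1) (hb : b ∈ Icc (0 : ℝ) 1) :
    IntervalIntegrable (fun x => (1 - x ^ n) ^ (-p)) volume a b := by
  have h01 : IntervalIntegrable (fun x => (1 - x ^ n) ^ (-p)) volume 0 1 := by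
    refine ((intervalIntegrable_one_sub_rpow_neg hp1 0 1).const_mul
      ((∑ i ∈ Finset.range n, (0 : ℝ) ^ i) ^ (-p))).mono_fun
      (by fun_prop : Measurable _).aestronglyMeasurable.restrict ?_
    rw [EventuallyLE, ae_restrict_iff' measurableSet_uIoc]
    filter_upwards with x hx
    rw [uIoc_of_le zero_le_one] at hx
    have hx0 : 0 ≤ x := hx.1.le
    have h1x : 0 ≤ 1 - x := by linarith [hx.2]
    have h1xn : 0 ≤ 1 - x ^ n := by linarith [pow_le_one₀ (n := n) hx0 hx.2]
    rw [norm_of_nonneg (by positivity), norm_of_nonneg (by positivity)]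
    exact one_sub_pow_rpow_neg_le hn hp0 le_rfl hx0 hx.2
  refine h01.mono_set (uIcc_subset_uIcc ?_ ?_) <;> rwa [uIcc_of_le zero_le_one]

lemma integral_one_sub_pow_rpow_neg_bounds (hn : 1 ≤ n) (hp0 : 0 ≤ p) (hp1 : p < 1) {y : ℝ}
    (hy0 : 0 ≤ y) (hy1 : y ≤ 1) :
    (n : ℝ) ^ (-p) * ((1 - y) ^ (1 - p) / (1 - p)) ≤ ∫ x in y..1, (1 - x ^ n) ^ (-p) ∧
      ∫ x in y..1, (1 - x ^ n) ^ (-p)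
        ≤ (∑ i ∈ Finset.range n, y ^ i) ^ (-p) * ((1 - y) ^ (1 - p) / (1 - p)) := by
  have hf := intervalIntegrable_one_sub_pow_rpow_neg hn hp0 hp1 ⟨hy0, hy1⟩ ⟨zero_le_one, le_rfl⟩
  have hg := intervalIntegrable_one_sub_rpow_neg hp1 y 1
  rw [← integral_one_sub_rpow_neg hp1 y, ← intervalIntegral.integral_const_mul,
    ← intervalIntegral.integral_const_mul]
  exact ⟨integral_mono_on hy1 (hg.const_mul _) hf fun x hx =>
      le_one_sub_pow_rpow_neg hn hp0 (hy0.trans hx.1) hx.2,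
    integral_mono_on hy1 hf (hg.const_mul _) fun x hx =>
      one_sub_pow_rpow_neg_le hn hp0 hy0 hx.1 hx.2⟩

lemma tendsto_integral_one_sub_pow_rpow_neg_div (hn : 1 ≤ n) (hp0 : 0 ≤ p) (hp1 : p < 1) :
    Tendsto (fun y => (∫ x in y..1, (1 - x ^ n) ^ (-p)) / (1 - y) ^ (1 - p)) (𝓝[<] 1)
      (𝓝 ((n : ℝ) ^ (-p) / (1 - p))) := by
  have hupper : Tendsto (fun y => (∑ i ∈ Finset.range n, y ^ i) ^ (-p) / (1 - p)) (𝓝[<] 1)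
      (𝓝 ((n : ℝ) ^ (-p) / (1 - p))) := by
    have h : Tendsto (fun y : ℝ => ∑ i ∈ Finset.range n, y ^ i) (𝓝[<] 1) (𝓝 n) := by
      simpa using ((by fun_prop : Continuous fun y : ℝ => ∑ i ∈ Finset.range n, y ^ i).tendsto
        1).mono_left nhdsWithin_le_nhds
    exact (h.rpow_const (Or.inl (by positivity))).div_const _
  have hbounds : ∀ᶠ y in 𝓝[<] (1 : ℝ),
      (n : ℝ) ^ (-p) / (1 - p) ≤ (∫ x in y..1, (1 - x ^ n) ^ (-p)) / (1 - y) ^ (1 - p) ∧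
      (∫ x in y..1, (1 - x ^ n) ^ (-p)) / (1 - y) ^ (1 - p)
        ≤ (∑ i ∈ Finset.range n, y ^ i) ^ (-p) / (1 - p) := by
    filter_upwards [Ioo_mem_nhdsLT zero_lt_one] with y hy
    have hpos : 0 < (1 - y) ^ (1 - p) := rpow_pos_of_pos (by linarith [hy.2]) _
    obtain ⟨hlo, hhi⟩ := integral_one_sub_pow_rpow_neg_bounds hn hp0 hp1 hy.1.le hy.2.le
    rw [le_div_iff₀ hpos, div_le_iff₀ hpos, div_mul_eq_mul_div, div_mul_eq_mul_div, mul_div_assoc,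
      mul_div_assoc]
    exact ⟨hlo, hhi⟩
  exact tendsto_of_tendsto_of_tendsto_of_le_of_le' tendsto_const_nhds hupper
    (hbounds.mono fun _ h => h.1) (hbounds.mono fun _ h => h.2)

noncomputable def integralOneSubPow (n : ℕ) (p y : ℝ) : ℝ :=
  ∫ x in (0 : ℝ)..y, (1 - x ^ n) ^ (-p)

lemma integralOneSubPow_sub (hn : 1 ≤ n) (hp0 : 0 ≤ p) (hp1 : p < 1) {a b : ℝ}
    (ha : a ∈ Icc (0 : ℝ) 1) (hb : b ∈ Icc (0 : ℝ) 1) :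
    integralOneSubPow n p b - integralOneSubPow n p a = ∫ x in a..b, (1 - x ^ n) ^ (-p) :=
  have h0 : (0 : ℝ) ∈ Icc 0 1 := left_mem_Icc.mpr zero_le_one
  integral_interval_sub_left (intervalIntegrable_one_sub_pow_rpow_neg hn hp0 hp1 h0 hb)
    (intervalIntegrable_one_sub_pow_rpow_neg hn hp0 hp1 h0 ha)

lemma strictMonoOn_integralOneSubPow (hn : 1 ≤ n) (hp0 : 0 ≤ p) (hp1 : p < 1) :
    StrictMonoOn (integralOneSubPow n p) (Icc 0 1) := by
  intro a ha b hb hab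
  rw [← sub_pos, integralOneSubPow_sub hn hp0 hp1 ha hb]
  refine intervalIntegral_pos_of_pos_on (intervalIntegrable_one_sub_pow_rpow_neg hn hp0 hp1 ha hb)
    (fun x hx => rpow_pos_of_pos ?_ _) hab
  linarith [pow_lt_one₀ (ha.1.trans hx.1.le) (hx.2.trans_le hb.2) (by omega : n ≠ 0)]

lemma continuousOn_integralOneSubPow (hn : 1 ≤ n) (hp0 : 0 ≤ p) (hp1 : p < 1) :
    ContinuousOn (integralOneSubPow n p) (Icc 0 1) := by
  have h := continuousOn_primitive_interval' (intervalIntegrable_one_sub_pow_rpow_neg hn hp0 hp1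
    (left_mem_Icc.mpr zero_le_one) (right_mem_Icc.mpr zero_le_one)) left_mem_uIcc
  rwa [uIcc_of_le zero_le_one] at h

lemma tendsto_one_sub_div_rpow_of_leftInvOn (hn : 1 ≤ n) (hp0 : 0 ≤ p) (hp1 : p < 1)
    {S : ℝ → ℝ} (hS : LeftInvOn S (integralOneSubPow n p) (Icc 0 1)) :
    Tendsto (fun u => (1 - S u) / (integralOneSubPow n p 1 - u) ^ (1 - p)⁻¹)
      (𝓝[<] integralOneSubPow n p 1) (𝓝 (((n : ℝ) ^ (-p) / (1 - p)) ^ (-(1 - p)⁻¹))) := by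
  set F := integralOneSubPow n p
  have h0 : (0 : ℝ) ∈ Icc 0 1 := left_mem_Icc.mpr zero_le_one
  have h1 : (1 : ℝ) ∈ Icc 0 1 := right_mem_Icc.mpr zero_le_one
  have hFc := continuousOn_integralOneSubPow hn hp0 hp1
  have hFm := strictMonoOn_integralOneSubPow hn hp0 hp1
  obtain ⟨hmaps, hinv⟩ := hFc.mapsTo_and_rightInvOn_of_leftInvOn zero_le_one hS
  have hSlim := hFc.tendsto_nhdsLT_of_leftInvOn zero_lt_one hFm hS
  have htail : ∀ᶠ u in 𝓝[<] F 1, F 1 - u = ∫ x in (S u)..1, (1 - x ^ n) ^ (-p) := by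
    filter_upwards [Ioo_mem_nhdsLT (hFm h0 h1 zero_lt_one)] with u hu
    have hu' : u ∈ Icc (F 0) (F 1) := ⟨hu.1.le, hu.2.le⟩
    conv_lhs => rw [← hinv hu']
    exact integralOneSubPow_sub hn hp0 hp1 (hmaps hu') h1
  refine tendsto_div_rpow_inv_of_tendsto_div_rpow (sub_pos.mpr hp1).ne'
    (div_pos (by positivity) (sub_pos.mpr hp1))
    (eventually_mem_nhdsWithin.mono fun u hu => sub_nonneg.mpr (le_of_lt hu))
    ((hSlim.eventually eventually_mem_nhdsWithin).mono fun u hu => sub_pos.mpr hu) ?_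
  exact ((tendsto_integral_one_sub_pow_rpow_neg_div hn hp0 hp1).comp hSlim).congr'
    (htail.mono fun u hu => by simp only [Function.comp_apply, hu])

end Integrand

theorem stmt_18_general (n : ℕ) (hn : 3 ≤ n)
    (F S : ℝ → ℝ)
    (hF : ∀ y, F y = ∫ x in (0:ℝ)..y, (1 - x ^ (n:ℝ)) ^ (-(1 / (n:ℝ))))
    (φ : ℝ) (hφ : φ = F 1)
    (hS1 : ∀ y ∈ Set.Icc (0:ℝ) 1, S (F y) = y) :
    (∃ c : ℝ, 0 < c ∧
      Filter.Tendsto (fun u : ℝ => (1 - S u) / (φ - u) ^ ((n : ℝ) / (n - 1)))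
        (nhdsWithin φ (Set.Iio φ)) (nhds c)) ∧
    ¬ ∃ g : ℝ → ℝ, AnalyticAt ℝ g φ ∧
        ∀ᶠ u in nhdsWithin φ (Set.Iio φ), g u = S u := by
  have hnR : (3 : ℝ) ≤ n := by exact_mod_cast hn
  have hp0 : (0 : ℝ) ≤ 1 / n := by positivity
  have hp1 : 1 / (n : ℝ) < 1 := by rw [div_lt_one (by positivity)]; linarith
  have hq : (1 - 1 / (n : ℝ))⁻¹ = n / (n - 1) := by field_simp
  obtain rfl : F = integralOneSubPow n (1 / n) :=
    funext fun y => by simpa only [integralOneSubPow, rpow_natCast] using hF y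
  subst hφ
  have hlim := hq ▸ tendsto_one_sub_div_rpow_of_leftInvOn (by omega) hp0 hp1 hS1
  refine ⟨⟨_, by positivity, hlim⟩, ?_⟩
  rintro ⟨g, hg, hgS⟩
  have hg1 : AnalyticAt ℝ (fun u => 1 - g u) _ := analyticAt_const.sub hg
  obtain ⟨m, hm⟩ := hg1.exists_natCast_eq_of_tendsto_div_rpow (q := n / (n - 1)) (by positivity)
    (hlim.congr' (hgS.mono fun u hu => by simp only [hu]))
  have h1 : (1 : ℝ) < m := by rw [← hm, lt_div_iff₀ (by linarith)]; linarith
  have h2 : (m : ℝ) < 2 := by rw [← hm, div_lt_iff₀ (by linarith)]; linarith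
  norm_cast at h1 h2
  omega

theorem stmt_18 (n : ℕ) (hn : 3 ≤ n)
    (F S : ℝ → ℝ)
    (hF : ∀ y, F y = ∫ x in (0:ℝ)..y, (1 - x ^ (n:ℝ)) ^ (-(1 / (n:ℝ))))
    (φ : ℝ) (hφ : φ = F 1)
    (hS1 : ∀ y ∈ Set.Icc (0:ℝ) 1, S (F y) = y)
    (hS2 : ∀ u ∈ Set.Icc (0:ℝ) φ, F (S u) = u) :
    (∃ c : ℝ, 0 < c ∧
      Filter.Tendsto (fun u : ℝ => (1 - S u) / (φ - u) ^ ((n : ℝ) / (n - 1)))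
        (nhdsWithin φ (Set.Iio φ)) (nhds c)) ∧
    ¬ ∃ g : ℝ → ℝ, AnalyticAt ℝ g φ ∧
        ∀ᶠ u in nhdsWithin φ (Set.Iio φ), g u = S u :=
  stmt_18_general n hn F S hF φ hφ hS1
end
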